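/- Let n ≥ 1, let X be a real n×n matrix with all entries nonnegative, let γ > 0 with ‖X‖ < γ in the ℓ∞ operator norm, let β > 0, and let Q ∈ ℝⁿ be a vector with all entries nonnegative and Q ≠ 0. Then the steady-state vector H* = β·(γ·I − X)⁻¹ Q has all entries nonnegative and H* ≠ 0; that is, the steady state is non-trivial. -/

import Mathlib

/-!
Writing `γ • 1 - X = γ • (1 - γ⁻¹ • X)` with `‖γ⁻¹ • X‖ < 1`, the Neumann series gives
`(γ • 1 - X)⁻¹ = γ⁻¹ • ∑ₖ (γ⁻¹ • X)ᵏ`, a matrix with nonnegative entries; so `H*` is nonnegative.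
It is nonzero because `(γ • 1 - X)⁻¹` is invertible and `Q ≠ 0`.
-/

open Matrix

attribute [local instance] Matrix.linftyOpNormedRing
attribute [local instance] Matrix.linftyOpNormedSpace

namespace Matrix

theorem mulVec_apply_nonneg {l m R : Type*} [Fintype m] [Semiring R] [PartialOrder R]
    [IsOrderedRing R] {M : Matrix l m R} {v : m → R} (hM : ∀ i j, 0 ≤ M i j)
    (hv : ∀ j, 0 ≤ v j) (i : l) : 0 ≤ (M *ᵥ v) i :=
  Finset.sum_nonneg fun j _ => mul_nonneg (hM i j) (hv j)

variable {m : Type*} [Fintype m] [DecidableEq m] {X : Matrix m m ℝ} {γ : ℝ}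

theorem norm_inv_smul_lt_one (h : ‖X‖ < γ) : ‖γ⁻¹ • X‖ < 1 := by
  have hγ : 0 < γ := (norm_nonneg X).trans_lt h
  rw [norm_smul, norm_inv, Real.norm_of_nonneg hγ.le, inv_mul_lt_iff₀ hγ, mul_one]
  exact h

theorem smul_one_sub_mul_tsum (h : ‖X‖ < γ) :
    (γ • 1 - X) * (γ⁻¹ • ∑' k : ℕ, (γ⁻¹ • X) ^ k) = 1 := by
  have hγ : γ ≠ 0 := ((norm_nonneg X).trans_lt h).ne'
  have hfactor : γ • 1 - X = γ • (1 - γ⁻¹ • X) := by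
    rw [smul_sub, smul_smul, mul_inv_cancel₀ hγ, one_smul]
  rw [hfactor, smul_mul_smul_comm, mul_inv_cancel₀ hγ, one_smul]
  exact mul_neg_geom_series _ (norm_inv_smul_lt_one h)

theorem inv_smul_one_sub_eq_tsum (h : ‖X‖ < γ) :
    (γ • 1 - X)⁻¹ = γ⁻¹ • ∑' k : ℕ, (γ⁻¹ • X) ^ k :=
  inv_eq_right_inv (smul_one_sub_mul_tsum h)

theorem smul_one_sub_mul_inv (h : ‖X‖ < γ) : (γ • 1 - X) * (γ • 1 - X)⁻¹ = 1 := by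
  rw [inv_smul_one_sub_eq_tsum h, smul_one_sub_mul_tsum h]

theorem inv_smul_one_sub_apply_nonneg (hX : ∀ i j, 0 ≤ X i j) (h : ‖X‖ < γ) (i j : m) :
    0 ≤ (γ • 1 - X)⁻¹ i j := by
  have hγ : 0 ≤ γ⁻¹ := inv_nonneg.mpr ((norm_nonneg X).trans h.le)
  have hseries := (summable_geometric_of_norm_lt_one (norm_inv_smul_lt_one h)).hasSum
  rw [inv_smul_one_sub_eq_tsum h, smul_apply, smul_eq_mul]
  exact mul_nonneg hγ <| (Pi.hasSum.mp (Pi.hasSum.mp hseries i) j).nonneg fun k =>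
    pow_apply_nonneg (fun i j => mul_nonneg hγ (hX i j)) k i j

end Matrix

theorem stmt3_general {n : ℕ} (X : Matrix (Fin n) (Fin n) ℝ)
    (hXnn : ∀ i j, 0 ≤ X i j) (γ : ℝ) (h : ‖X‖ < γ)
    (β : ℝ) (hβ : 0 < β) (Q : Fin n → ℝ) (hQnn : ∀ i, 0 ≤ Q i) (hQ : Q ≠ 0) :
    (∀ i, 0 ≤ (β • ((γ • (1 : Matrix (Fin n) (Fin n) ℝ) - X)⁻¹ *ᵥ Q)) i) ∧
      β • ((γ • (1 : Matrix (Fin n) (Fin n) ℝ) - X)⁻¹ *ᵥ Q) ≠ 0 := by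
  refine ⟨fun i => mul_nonneg hβ.le
    (mulVec_apply_nonneg (inv_smul_one_sub_apply_nonneg hXnn h) hQnn i), ?_⟩
  refine smul_ne_zero hβ.ne' fun hzero => hQ ?_
  rw [← one_mulVec Q, ← smul_one_sub_mul_inv h, ← mulVec_mulVec, hzero, mulVec_zero]

/-- For `n ≥ 1`, a real `n×n` matrix `X` with nonnegative entries,
`γ > 0` with `‖X‖ < γ` (ℓ∞ operator norm), `β > 0`, and a nonnegative nonzero vector
`Q ∈ ℝⁿ`, the steady-state vector `H* = β • ((γ•I - X)⁻¹ *ᵥ Q)` has all entries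
nonnegative and `H* ≠ 0`: the steady state is non-trivial. -/
theorem stmt3 {n : ℕ} (hn : 1 ≤ n) (X : Matrix (Fin n) (Fin n) ℝ)
    (hXnn : ∀ i j, 0 ≤ X i j) (γ : ℝ) (hγ : 0 < γ) (h : ‖X‖ < γ)
    (β : ℝ) (hβ : 0 < β) (Q : Fin n → ℝ) (hQnn : ∀ i, 0 ≤ Q i) (hQ : Q ≠ 0) :
    (∀ i, 0 ≤ (β • ((γ • (1 : Matrix (Fin n) (Fin n) ℝ) - X)⁻¹ *ᵥ Q)) i) ∧
      β • ((γ • (1 : Matrix (Fin n) (Fin n) ℝ) - X)⁻¹ *ᵥ Q) ≠ 0 :=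
  stmt3_general X hXnn γ h β hβ Q hQnn hQ
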